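/- The number of ordered ranked trees of size n that are caterpillars or pseudocaterpillars equals 3·2^{n−2} for n ≥ 4, with 2^{n−1} caterpillars and 2^{n−2} pseudocaterpillars. -/

import Mathlib

/-- Rooted binary plane trees with a natural-number label at each internal node. -/
inductive OTree where
  | leaf : OTree
  | node : ℕ → OTree → OTree → OTree
  deriving DecidableEq

/-- Multiset of internal-node labels. -/
def iLabels : OTree → Multiset ℕ
  | .leaf => 0
  | .node k a b => k ::ₘ (iLabels a + iLabels b)

/-- Size of a tree: its number of internal nodes. -/
def size (t : OTree) : ℕ := (iLabels t).card

/-- Internal labels increase along every root-to-leaf path. -/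
def Increasing : OTree → Prop
  | .leaf => True
  | .node k a b => (∀ j ∈ iLabels a + iLabels b, k < j) ∧ Increasing a ∧ Increasing b

/-- An ordered ranked tree of size `n`: internal nodes bijectively labeled
`1,…,n`, increasingly from the root toward the leaves. -/
def IsOrderedRankedTree (n : ℕ) (t : OTree) : Prop :=
  iLabels t = (Finset.Icc 1 n).val ∧ Increasing t

/-- A caterpillar: every internal node has at least one leaf child. -/
def IsCat : OTree → Prop
  | .leaf => True
  | .node _ a b => (a = .leaf ∨ b = .leaf) ∧ IsCat a ∧ IsCat b

/-- The 1-2 condition for a pair of sibling subtrees: one has size at least 1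
and the other size at least 2. -/
def OneTwoPair (a b : OTree) : Prop :=
  (1 ≤ size a ∧ 2 ≤ size b) ∨ (2 ≤ size a ∧ 1 ≤ size b)

/-- No internal node of the tree satisfies the 1-2 condition. -/
def NoOneTwo : OTree → Prop
  | .leaf => True
  | .node _ a b => ¬ OneTwoPair a b ∧ NoOneTwo a ∧ NoOneTwo b

/-- A pseudocaterpillar: not a caterpillar, yet no internal node satisfies the
1-2 condition. -/
def IsPseudoCat (t : OTree) : Prop := ¬ IsCat t ∧ NoOneTwo t

/-!
In an increasingly labelled tree the root carries the smallest label. In a caterpillar every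
internal node but the lowest has exactly one internal child, so the labels `1, …, n` run down a
single path and the tree is determined by the sides of the `n - 1` leaves hanging off it:
`2 ^ (n - 1)` trees. A tree without the 1-2 condition that is not a caterpillar follows the same
path until a node with two internal children; these must both have size one, so the path ends in
two cherries labelled `n - 1` and `n` in either order: `2 ^ (n - 3) * 2` trees. The two classes are
disjoint.
-/

open Finset (Icc)

lemma Nat.Icc_val_eq_cons {k n : ℕ} (h : k ≤ n) :
    (Icc k n).val = k ::ₘ (Icc (k + 1) n).val := by
  rw [Finset.Icc_eq_cons_Ioc h, Finset.cons_val, Finset.Icc_add_one_left_eq_Ioc]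

namespace OTree

lemma size_node (k : ℕ) (a b : OTree) : size (node k a b) = size a + size b + 1 := by
  simp [size, iLabels]

lemma size_pos_of_ne_leaf {t : OTree} (h : t ≠ leaf) : 0 < size t := by
  cases t with
  | leaf => exact absurd rfl h
  | node k a b => simp [size_node]

def cherry (k : ℕ) : OTree := node k leaf leaf

lemma eq_leaf_of_size_eq_zero {t : OTree} (h : size t = 0) : t = leaf := by
  cases t with
  | leaf => rfl
  | node k a b => simp [size_node] at h

lemma eq_cherry_of_size_eq_one {t : OTree} (h : size t = 1) : ∃ j, t = cherry j := by
  cases t with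
  | leaf => simp [size, iLabels] at h
  | node j a b =>
    rw [size_node] at h
    rw [eq_leaf_of_size_eq_zero (t := a) (by omega), eq_leaf_of_size_eq_zero (t := b) (by omega)]
    exact ⟨j, rfl⟩

lemma root_eq_of_iLabels_eq_Icc {j k n : ℕ} {a b : OTree}
    (hinc : Increasing (node j a b)) (hlab : iLabels (node j a b) = (Icc k n).val) :
    j = k ∧ iLabels a + iLabels b = (Icc (k + 1) n).val := by
  have hj : j ∈ Icc k n := by simp [← Finset.mem_val, ← hlab, iLabels]
  have hkn : k ≤ n := (Finset.mem_Icc.1 hj).1.trans (Finset.mem_Icc.1 hj).2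
  have hk : k ∈ iLabels (node j a b) := by rw [hlab]; simp [hkn]
  obtain rfl : j = k := by
    rcases Multiset.mem_cons.1 hk with h | h
    · exact h.symm
    · exact absurd (hinc.1 k h) (by rw [Finset.mem_Icc] at hj; omega)
  rw [Nat.Icc_val_eq_cons hkn] at hlab
  exact ⟨rfl, (Multiset.cons_inj_right _).1 hlab⟩

/-- The path of internal nodes `k, k + 1, …` with a leaf hanging off each (on the right for
`true`), ending in the subtree `base (k + bs.length)`. -/
def spine (base : ℕ → OTree) : ℕ → List Bool → OTree
  | k, [] => base k
  | k, true :: bs => node k (spine base (k + 1) bs) leaf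
  | k, false :: bs => node k leaf (spine base (k + 1) bs)

section spine

variable {base : ℕ → OTree}

lemma iLabels_spine {d : ℕ} (hbase : ∀ m, iLabels (base m) = (Icc m (m + d)).val) :
    ∀ k bs, iLabels (spine base k bs) = (Icc k (k + bs.length + d)).val
  | k, [] => by simpa [spine] using hbase k
  | k, b :: bs => by
    rw [Nat.Icc_val_eq_cons (by omega), List.length_cons, ← add_assoc, add_right_comm k,
      ← iLabels_spine hbase (k + 1) bs]
    cases b <;> simp [spine, iLabels]

lemma increasing_spine {d : ℕ} (hlab : ∀ m, iLabels (base m) = (Icc m (m + d)).val)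
    (hinc : ∀ m, Increasing (base m)) : ∀ k bs, Increasing (spine base k bs)
  | k, [] => hinc k
  | k, b :: bs => by
    have hgt : ∀ j ∈ iLabels (spine base (k + 1) bs), k < j := by
      intro j hj
      rw [iLabels_spine hlab, Finset.mem_val, Finset.mem_Icc] at hj
      omega
    have := increasing_spine hlab hinc (k + 1) bs
    cases b <;> simpa [spine, Increasing, iLabels, this]

lemma isCat_spine_iff : ∀ {k} bs, IsCat (spine base k bs) ↔ IsCat (base (k + bs.length))
  | k, [] => by simp [spine]
  | k, b :: bs => by
    rw [List.length_cons, ← add_assoc, add_right_comm, ← isCat_spine_iff bs]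
    cases b <;> simp [spine, IsCat]

lemma not_oneTwoPair_leaf_left (t : OTree) : ¬ OneTwoPair leaf t := by
  simp [OneTwoPair, size, iLabels]

lemma not_oneTwoPair_leaf_right (t : OTree) : ¬ OneTwoPair t leaf := by
  simp [OneTwoPair, size, iLabels]

lemma noOneTwo_spine_iff :
    ∀ {k} bs, NoOneTwo (spine base k bs) ↔ NoOneTwo (base (k + bs.length))
  | k, [] => by simp [spine]
  | k, b :: bs => by
    rw [List.length_cons, ← add_assoc, add_right_comm, ← noOneTwo_spine_iff bs]
    cases b <;> simp [spine, NoOneTwo, not_oneTwoPair_leaf_left, not_oneTwoPair_leaf_right]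

lemma spine_ne_leaf (hbase : ∀ m, base m ≠ leaf) : ∀ k bs, spine base k bs ≠ leaf
  | k, [] => hbase k
  | k, true :: bs => by simp [spine]
  | k, false :: bs => by simp [spine]

lemma spine_inj {base' : ℕ → OTree} (hbase : ∀ m, base m ≠ leaf)
    (hbase' : ∀ m, base' m ≠ leaf) :
    ∀ {k} {bs cs : List Bool}, bs.length = cs.length → spine base k bs = spine base' k cs →
      bs = cs ∧ base (k + bs.length) = base' (k + bs.length)
  | k, [], [], _, h => ⟨rfl, h⟩
  | k, b :: bs, c :: cs, hlen, h => by
    have hne := spine_ne_leaf hbase (k + 1) bs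
    have hne' := spine_ne_leaf hbase' (k + 1) cs
    have htail : bs = cs ∧ base (k + 1 + bs.length) = base' (k + 1 + bs.length) := by
      apply spine_inj hbase hbase' (by simpa using hlen)
      cases b <;> cases c <;> simp_all [spine]
    obtain ⟨rfl, hbase_eq⟩ := htail
    rw [List.length_cons, ← add_assoc, add_right_comm]
    refine ⟨?_, hbase_eq⟩
    cases b <;> cases c <;> simp_all [spine]

end spine

lemma iLabels_cherry (k : ℕ) : iLabels (cherry k) = (Icc k (k + 0)).val := by
  simp [cherry, iLabels]

lemma increasing_cherry (k : ℕ) : Increasing (cherry k) := by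
  simp [cherry, Increasing, iLabels]

lemma isCat_cherry (k : ℕ) : IsCat (cherry k) := by
  simp [cherry, IsCat]

def twoCherries : Bool → ℕ → OTree
  | true, k => node k (cherry (k + 1)) (cherry (k + 2))
  | false, k => node k (cherry (k + 2)) (cherry (k + 1))

lemma iLabels_twoCherries (c : Bool) (k : ℕ) :
    iLabels (twoCherries c k) = (Icc k (k + 2)).val := by
  rw [Nat.Icc_val_eq_cons (by omega), Nat.Icc_val_eq_cons (by omega),
    Nat.Icc_val_eq_cons (by omega), Finset.Icc_eq_empty (by omega)]
  cases c
  · simpa [twoCherries, cherry, iLabels] using Multiset.pair_comm (k + 2) (k + 1)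
  · simp [twoCherries, cherry, iLabels]

lemma increasing_twoCherries (c : Bool) (k : ℕ) : Increasing (twoCherries c k) := by
  cases c <;> simp [twoCherries, cherry, Increasing, iLabels]

lemma not_isCat_twoCherries (c : Bool) (k : ℕ) : ¬ IsCat (twoCherries c k) := by
  cases c <;> simp [twoCherries, cherry, IsCat]

lemma noOneTwo_twoCherries (c : Bool) (k : ℕ) : NoOneTwo (twoCherries c k) := by
  cases c <;> simp [twoCherries, cherry, NoOneTwo, OneTwoPair, size, iLabels]

lemma twoCherries_injective (k : ℕ) : Function.Injective (twoCherries · k) := by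
  intro c d h
  cases c <;> cases d <;> simp_all [twoCherries, cherry]

lemma exists_spine_cherry_of_isCat : ∀ {t : OTree} {k n : ℕ}, k ≤ n →
    iLabels t = (Icc k n).val → Increasing t → IsCat t →
      ∃ bs : List Bool, k + bs.length = n ∧ t = spine cherry k bs
  | leaf, k, n, hkn, hlab, _, _ => by
    have : k ∈ (Icc k n).val := by simp [hkn]
    simp [← hlab, iLabels] at this
  | node j a b, k, n, hkn, hlab, hinc, hcat => by
    obtain ⟨rfl, hchildren⟩ := root_eq_of_iLabels_eq_Icc hinc hlab
    rcases hkn.eq_or_lt with rfl | hlt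
    · have hsize : size a + size b = 0 := by
        simpa [size] using congrArg Multiset.card hchildren
      rw [eq_leaf_of_size_eq_zero (t := a) (by omega), eq_leaf_of_size_eq_zero (t := b) (by omega)]
      exact ⟨[], rfl, rfl⟩
    obtain ⟨hleaf, hcat_a, hcat_b⟩ := hcat
    rcases hleaf with rfl | rfl
    · obtain ⟨bs, hlen, rfl⟩ :=
        exists_spine_cherry_of_isCat hlt (by simpa [iLabels] using hchildren) hinc.2.2 hcat_b
      exact ⟨false :: bs, by simp only [List.length_cons]; omega, rfl⟩
    · obtain ⟨bs, hlen, rfl⟩ :=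
        exists_spine_cherry_of_isCat hlt (by simpa [iLabels] using hchildren) hinc.2.1 hcat_a
      exact ⟨true :: bs, by simp only [List.length_cons]; omega, rfl⟩

lemma eq_twoCherries_of_iLabels_eq_Icc {j₁ j₂ k n : ℕ}
    (hlab : iLabels (cherry j₁) + iLabels (cherry j₂) = (Icc (k + 1) n).val) :
    ∃ c, n = k + 2 ∧ node k (cherry j₁) (cherry j₂) = twoCherries c k := by
  simp only [cherry, iLabels, add_zero, Multiset.cons_add, zero_add] at hlab
  have hn : n = k + 2 := by
    have hcard := congrArg Multiset.card hlab
    rw [Finset.card_val, Nat.card_Icc] at hcard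
    simp only [Multiset.card_cons, Multiset.card_zero] at hcard
    omega
  subst hn
  have hnodup := hlab ▸ (Icc (k + 1) (k + 2)).nodup
  have hj₁ : j₁ ∈ Icc (k + 1) (k + 2) := by simp [← Finset.mem_val, ← hlab]
  have hj₂ : j₂ ∈ Icc (k + 1) (k + 2) := by simp [← Finset.mem_val, ← hlab]
  simp only [Finset.mem_Icc] at hj₁ hj₂
  simp only [Multiset.nodup_cons, Multiset.mem_cons, Multiset.notMem_zero, or_false] at hnodup
  obtain ⟨rfl, rfl⟩ | ⟨rfl, rfl⟩ :
      j₁ = k + 1 ∧ j₂ = k + 2 ∨ j₁ = k + 2 ∧ j₂ = k + 1 := by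
    omega
  · exact ⟨true, rfl, rfl⟩
  · exact ⟨false, rfl, rfl⟩

lemma exists_spine_twoCherries_of_isPseudoCat : ∀ {t : OTree} {k n : ℕ},
    iLabels t = (Icc k n).val → Increasing t → NoOneTwo t → ¬ IsCat t →
      ∃ (bs : List Bool) (c : Bool), k + bs.length + 2 = n ∧ t = spine (twoCherries c) k bs
  | leaf, _, _, _, _, _, hcat => absurd trivial hcat
  | node j a b, k, n, hlab, hinc, hno, hcat => by
    obtain ⟨rfl, hchildren⟩ := root_eq_of_iLabels_eq_Icc hinc hlab
    by_cases ha : a = leaf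
    · subst ha
      obtain ⟨bs, c, hlen, rfl⟩ := exists_spine_twoCherries_of_isPseudoCat
        (by simpa [iLabels] using hchildren) hinc.2.2 hno.2.2 (by simpa [IsCat] using hcat)
      exact ⟨false :: bs, c, by simp only [List.length_cons]; omega, rfl⟩
    by_cases hb : b = leaf
    · subst hb
      obtain ⟨bs, c, hlen, rfl⟩ := exists_spine_twoCherries_of_isPseudoCat
        (by simpa [iLabels] using hchildren) hinc.2.1 hno.2.1 (by simpa [IsCat] using hcat)
      exact ⟨true :: bs, c, by simp only [List.length_cons]; omega, rfl⟩
    have hsa := size_pos_of_ne_leaf ha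
    have hsb := size_pos_of_ne_leaf hb
    have h12 := hno.1
    simp only [OneTwoPair] at h12
    obtain ⟨j₁, rfl⟩ := eq_cherry_of_size_eq_one (t := a) (by omega)
    obtain ⟨j₂, rfl⟩ := eq_cherry_of_size_eq_one (t := b) (by omega)
    obtain ⟨c, hn, heq⟩ := eq_twoCherries_of_iLabels_eq_Icc hchildren
    exact ⟨[], c, by simp [hn], heq⟩

end OTree

lemma Nat.card_subtype_or_of_disjoint {α : Type*} {p q : α → Prop} (h : ∀ x, p x → ¬ q x)
    [Finite {x // p x}] [Finite {x // q x}] :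
    Nat.card {x // p x ∨ q x} = Nat.card {x // p x} + Nat.card {x // q x} := by
  classical
  have hdisj : Disjoint p q :=
    Pi.disjoint_iff.2 fun x => Prop.disjoint_iff.2 fun hpq => h x hpq.1 hpq.2
  rw [Nat.card_congr (subtypeOrEquiv p q hdisj), Nat.card_sum]

lemma Nat.card_vector_bool (m : ℕ) : Nat.card (List.Vector Bool m) = 2 ^ m := by
  simp [Nat.card_eq_fintype_card]

open OTree

lemma isOrderedRankedTree_spine {base : ℕ → OTree} {d n : ℕ}
    (hlab : ∀ m, iLabels (base m) = (Icc m (m + d)).val) (hinc : ∀ m, Increasing (base m))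
    {bs : List Bool} (hlen : 1 + bs.length + d = n) : IsOrderedRankedTree n (spine base 1 bs) :=
  ⟨hlen ▸ iLabels_spine hlab 1 bs, increasing_spine hlab hinc 1 bs⟩

lemma card_caterpillars {n : ℕ} (hn : 1 ≤ n) :
    Nat.card {t : OTree // IsOrderedRankedTree n t ∧ IsCat t} = 2 ^ (n - 1) := by
  have hne : ∀ m, cherry m ≠ leaf := by simp [cherry]
  let f (v : List.Vector Bool (n - 1)) : {t : OTree // IsOrderedRankedTree n t ∧ IsCat t} :=
    ⟨spine cherry 1 v.1,
      isOrderedRankedTree_spine iLabels_cherry increasing_cherry (by simp only [List.Vector.length_val]; omega),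
      (isCat_spine_iff _).2 (isCat_cherry _)⟩
  have hf : Function.Bijective f := by
    refine ⟨fun v w hvw => ?_, fun ⟨t, ⟨hlab, hinc⟩, hcat⟩ => ?_⟩
    · exact List.Vector.eq _ _
        (spine_inj hne hne (v.2.trans w.2.symm) (congrArg Subtype.val hvw)).1
    · obtain ⟨bs, hlen, rfl⟩ := exists_spine_cherry_of_isCat hn hlab hinc hcat
      exact ⟨⟨bs, by omega⟩, rfl⟩
  rw [← Nat.card_congr (Equiv.ofBijective f hf), Nat.card_vector_bool]

lemma card_pseudocaterpillars {n : ℕ} (hn : 3 ≤ n) :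
    Nat.card {t : OTree // IsOrderedRankedTree n t ∧ IsPseudoCat t} = 2 ^ (n - 2) := by
  have hne : ∀ c m, twoCherries c m ≠ leaf := by intro c m; cases c <;> simp [twoCherries]
  let f (p : List.Vector Bool (n - 3) × Bool) :
      {t : OTree // IsOrderedRankedTree n t ∧ IsPseudoCat t} :=
    ⟨spine (twoCherries p.2) 1 p.1.1,
      isOrderedRankedTree_spine (iLabels_twoCherries p.2) (increasing_twoCherries p.2)
        (by simp only [List.Vector.length_val]; omega),
      (isCat_spine_iff _).not.2 (not_isCat_twoCherries _ _),
      (noOneTwo_spine_iff _).2 (noOneTwo_twoCherries _ _)⟩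
  have hf : Function.Bijective f := by
    refine ⟨fun p q hpq => ?_, fun ⟨t, ⟨hlab, hinc⟩, hcat, hno⟩ => ?_⟩
    · obtain ⟨hbs, hbase⟩ := spine_inj (hne p.2) (hne q.2) (p.1.2.trans q.1.2.symm)
        (congrArg Subtype.val hpq)
      exact Prod.ext (List.Vector.eq _ _ hbs) (twoCherries_injective _ hbase)
    · obtain ⟨bs, c, hlen, rfl⟩ := exists_spine_twoCherries_of_isPseudoCat hlab hinc hno hcat
      exact ⟨(⟨bs, by omega⟩, c), rfl⟩
  rw [← Nat.card_congr (Equiv.ofBijective f hf), Nat.card_prod, Nat.card_vector_bool,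
    Nat.card_eq_fintype_card, Fintype.card_bool, ← pow_succ]
  congr 1
  omega

theorem count_caterpillar_pseudocaterpillar (n : ℕ) (hn : 4 ≤ n) :
    Nat.card { t : OTree // IsOrderedRankedTree n t ∧ IsCat t } = 2 ^ (n - 1) ∧
      Nat.card { t : OTree // IsOrderedRankedTree n t ∧ IsPseudoCat t } = 2 ^ (n - 2) ∧
        Nat.card { t : OTree // IsOrderedRankedTree n t ∧ (IsCat t ∨ IsPseudoCat t) } =
          3 * 2 ^ (n - 2) := by
  have hcat := card_caterpillars (n := n) (by omega)
  have hpseudo := card_pseudocaterpillars (n := n) (by omega)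
  have : Finite {t : OTree // IsOrderedRankedTree n t ∧ IsCat t} :=
    Nat.finite_of_card_ne_zero (by simp [hcat])
  have : Finite {t : OTree // IsOrderedRankedTree n t ∧ IsPseudoCat t} :=
    Nat.finite_of_card_ne_zero (by simp [hpseudo])
  refine ⟨hcat, hpseudo, ?_⟩
  simp only [and_or_left]
  rw [Nat.card_subtype_or_of_disjoint fun _ hc hp => hp.2.1 hc.2, hcat, hpseudo,
    show n - 1 = n - 2 + 1 by omega, pow_succ]
  ring
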